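/- arXiv:1301.1408 — 5 statements merged into one kernel-verified Lean document; each statement's English description precedes it below -/
import Mathlib

section
/- For every continuous function f : ℝ → ℂ with f(0) = 0, one has str(exp(f(D))) = χ(G), where f(D) is defined via the spectral decomposition of the symmetric matrix D (if D = Uᵀ Λ U with Λ diagonal, then f(D) = Uᵀ f(Λ) U, and exp(f(D)) is the matrix exponential of f(D)). -/
/-!
Since `d` raises the degree by one, the grading `γ` anticommutes with `D`. Conjugating by `U`,
`M = U γ Uᵀ` anticommutes with `Λ = diag λ`, so `2 λᵢ Mᵢᵢ = 0` and the diagonal of `M` vanishes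
wherever `λᵢ ≠ 0`. Hence `str (exp f(D)) = tr (M · diag (exp f(λ)))` only sees the indices with
`λᵢ = 0`, where `exp (f 0) = 1`, and it equals `tr M = tr γ = χ(G)`.
-/

open Matrix Finset BigOperators

variable {V : Type*} [Fintype V] [LinearOrder V]

/-- Incidence coefficient between finsets `t` and `s`: it is `(-1)^i` if `s` is obtained from `t`
by deleting its `i`-th vertex (in the linear order on vertices), and `0` otherwise. This encodes
the exterior derivative `(d f)(x_0,…,x_{k+1}) = ∑ i (−1)^i f(x_0,…,x̂_i,…,x_{k+1})` on simplices
whose vertices are ordered increasingly. -/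
def dEntry (t s : Finset V) : ℝ :=
  ∑ v ∈ t, if s = t.erase v then (-1 : ℝ) ^ (t.filter (· < v)).card else 0

variable (G : SimpleGraph V) [DecidableRel G.Adj]

/-- The set `𝒢_k` of `k`-simplices of `G`, i.e. the complete subgraphs on `k+1` vertices,
encoded as the `(k+1)`-cliques of `G`.  `Ω_k = Cl G k → ℝ` is the space of `k`-forms. -/
abbrev Cl (k : ℕ) := {s : Finset V // s ∈ G.cliqueFinset (k + 1)}

/-- The set `𝒢` of all simplices (nonempty complete subgraphs) of `G`; the total space of forms
is `Ω = ⊕_k Ω_k = Simp G → ℝ`. -/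
abbrev Simp := {s : Finset V // s.Nonempty ∧ s ∈ G.cliqueFinset s.card}

/-- The exterior derivative `d_k : Ω_k → Ω_{k+1}` as a matrix (its transpose is `d_k^*`). -/
def dMat (k : ℕ) : Matrix (Cl G (k + 1)) (Cl G k) ℝ := fun t s => dEntry t.1 s.1

/-- The Laplace–Beltrami block `L_p = d_p^* d_p + d_{p-1} d_{p-1}^*` on `Ω_p` (with `d_{-1} = 0`). -/
def Lmat : (p : ℕ) → Matrix (Cl G p) (Cl G p) ℝ
  | 0 => (dMat G 0)ᵀ * dMat G 0
  | (k + 1) => (dMat G (k + 1))ᵀ * dMat G (k + 1) + dMat G k * (dMat G k)ᵀ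

/-- The total exterior derivative `d = ⊕_k d_k` on `Ω`, as a matrix on the simplex set. -/
def dTot : Matrix (Simp G) (Simp G) ℝ := fun t s => dEntry t.1 s.1

/-- The Dirac operator `D = d + d^*` of `G`, as a symmetric matrix on the simplex set. -/
def Dmat : Matrix (Simp G) (Simp G) ℝ := dTot G + (dTot G)ᵀ

/-- The Euler characteristic `χ(G) = ∑_k (−1)^k v_k = ∑_{x ∈ 𝒢} (−1)^{dim x}`. -/
def chi : ℤ := ∑ s : Simp G, (-1) ^ (s.1.card - 1)

/-- The supertrace `str(A) = tr(γ A)` where `γ` acts by `(−1)^k` on `Ω_k`. -/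
def str {R : Type*} [CommRing R] (A : Matrix (Simp G) (Simp G) R) : R :=
  ∑ s : Simp G, (-1) ^ (s.1.card - 1) * A s s

/-- The `k`-th Betti number `b_k = dim ker d_k − rank d_{k−1}` (with `d_{−1} = 0`). -/
noncomputable def betti : ℕ → ℕ
  | 0 => Module.finrank ℝ (LinearMap.ker (dMat G 0).mulVecLin)
  | (k + 1) => Module.finrank ℝ (LinearMap.ker (dMat G (k + 1)).mulVecLin) - (dMat G k).rank

section Anticommutation

variable {n R : Type*} [Fintype n] [DecidableEq n]

theorem Matrix.diagonal_mul_add_mul_diagonal_eq_zero [CommSemiring R] {ε : n → R}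
    {D : Matrix n n R} (h : ∀ i j, D i j ≠ 0 → ε i + ε j = 0) :
    diagonal ε * D + D * diagonal ε = 0 := by
  ext i j
  rw [add_apply, diagonal_mul, mul_diagonal, zero_apply]
  by_cases hD : D i j = 0
  · simp [hD]
  · rw [mul_comm, ← mul_add, h i j hD, mul_zero]

theorem Matrix.conj_mul_add_mul_conj_eq_zero [CommRing R] {Γ D W U Λ : Matrix n n R}
    (hWU : W * U = 1) (hD : D = W * Λ * U) (hanti : Γ * D + D * Γ = 0) :
    U * Γ * W * Λ + Λ * (U * Γ * W) = 0 := by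
  have hUW : U * W = 1 := mul_eq_one_comm.mp hWU
  have hΛ : Λ = U * D * W := by
    rw [hD, ← Matrix.mul_assoc, ← Matrix.mul_assoc, hUW, Matrix.one_mul, Matrix.mul_assoc,
      hUW, Matrix.mul_one]
  calc U * Γ * W * Λ + Λ * (U * Γ * W) = U * (Γ * (W * U) * D + D * (W * U) * Γ) * W := by
        rw [hΛ]; simp only [Matrix.mul_add, Matrix.add_mul, Matrix.mul_assoc]
    _ = 0 := by rw [hWU, Matrix.mul_one, Matrix.mul_one, hanti, Matrix.mul_zero, Matrix.zero_mul]

theorem Matrix.diag_eq_zero_of_mul_diagonal_add_diagonal_mul_eq_zero [CommRing R]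
    [NoZeroDivisors R] [CharZero R] {M : Matrix n n R} {μ : n → R}
    (h : M * diagonal μ + diagonal μ * M = 0) {i : n} (hμ : μ i ≠ 0) : M i i = 0 := by
  have hii : 2 * (μ i * M i i) = 0 := by
    have := congr_fun₂ h i i
    rw [add_apply, mul_diagonal, diagonal_mul, zero_apply] at this
    linear_combination this
  simpa [hμ] using hii

theorem Matrix.trace_mul_diagonal_eq_trace [CommSemiring R] {M : Matrix n n R} {c : n → R}
    (h : ∀ i, M i i = 0 ∨ c i = 1) : trace (M * diagonal c) = trace M := by
  refine Finset.sum_congr rfl fun i _ => ?_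
  rcases h i with h | h <;> simp [h]

theorem Matrix.trace_mul_exp_conj_diagonal_eq_trace {𝕜 : Type*} [RCLike 𝕜]
    {Γ D W U : Matrix n n 𝕜} {μ ν : n → 𝕜} (hWU : W * U = 1) (hD : D = W * diagonal μ * U)
    (hanti : Γ * D + D * Γ = 0) (hν : ∀ i, μ i = 0 → ν i = 0) :
    trace (Γ * NormedSpace.exp (W * diagonal ν * U)) = trace Γ := by
  let P : (Matrix n n 𝕜)ˣ := ⟨U, W, mul_eq_one_comm.mp hWU, hWU⟩
  have hexp : NormedSpace.exp (W * diagonal ν * U) = W * diagonal (NormedSpace.exp ν) * U := by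
    simpa [P, exp_diagonal] using exp_units_conj' P (diagonal ν)
  have hM : ∀ i, μ i ≠ 0 → (U * Γ * W) i i = 0 := fun i =>
    diag_eq_zero_of_mul_diagonal_add_diagonal_mul_eq_zero
      (conj_mul_add_mul_conj_eq_zero hWU hD hanti)
  calc trace (Γ * NormedSpace.exp (W * diagonal ν * U))
      = trace (U * Γ * W * diagonal (NormedSpace.exp ν)) := by
        rw [hexp, ← Matrix.mul_assoc, trace_mul_comm]; simp only [Matrix.mul_assoc]
    _ = trace (U * Γ * W) := trace_mul_diagonal_eq_trace fun i => by
        by_cases hμ : μ i = 0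
        · simp [hν i hμ]
        · exact Or.inl (hM i hμ)
    _ = trace Γ := by
        rw [Matrix.mul_assoc, trace_mul_comm, Matrix.mul_assoc, hWU, Matrix.mul_one]

end Anticommutation

theorem card_add_one_of_dEntry_ne_zero {α : Type*} [LinearOrder α] {t s : Finset α}
    (h : dEntry t s ≠ 0) : s.card + 1 = t.card := by
  obtain ⟨v, hv, hne⟩ := Finset.exists_ne_zero_of_sum_ne_zero h
  have hsv : s = t.erase v := by
    by_contra hsv
    simp [hsv] at hne
  rw [hsv, Finset.card_erase_add_one hv]

theorem card_succ_or_of_Dmat_ne_zero {t s : Simp G} (h : Dmat G t s ≠ 0) :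
    s.1.card + 1 = t.1.card ∨ t.1.card + 1 = s.1.card := by
  by_contra! hc
  apply h
  have hts : dEntry t.1 s.1 = 0 := not_imp_comm.mp card_add_one_of_dEntry_ne_zero hc.1
  have hst : dEntry s.1 t.1 = 0 := not_imp_comm.mp card_add_one_of_dEntry_ne_zero hc.2
  rw [Dmat, Matrix.add_apply, transpose_apply, dTot, dTot, hts, hst, add_zero]

theorem neg_one_pow_pred_add_neg_one_pow_pred {R : Type*} [Ring R] {a b : ℕ} (ha : 1 ≤ a)
    (hab : a + 1 = b) : (-1 : R) ^ (a - 1) + (-1) ^ (b - 1) = 0 := by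
  obtain ⟨m, rfl⟩ := Nat.exists_eq_add_of_le' ha
  subst hab
  simp [pow_succ]

/-- The grading operator `γ`, acting on `Ω_k` by `(-1)^k`. -/
def grading (R : Type*) [CommRing R] : Matrix (Simp G) (Simp G) R :=
  diagonal fun s => (-1) ^ (s.1.card - 1)

theorem str_eq_trace_grading_mul {R : Type*} [CommRing R] (A : Matrix (Simp G) (Simp G) R) :
    str G A = trace (grading G R * A) := by
  simp [str, grading, trace, diagonal_mul]

theorem trace_grading (R : Type*) [CommRing R] : trace (grading G R) = chi G := by
  simp [grading, chi, trace_diagonal]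

theorem grading_mul_add_mul_grading {R : Type*} [CommRing R] (φ : ℝ →+* R) :
    grading G R * (Dmat G).map φ + (Dmat G).map φ * grading G R = 0 := by
  refine diagonal_mul_add_mul_diagonal_eq_zero fun t s h => ?_
  have h' : Dmat G t s ≠ 0 := fun h0 => h (by simp [h0])
  rcases card_succ_or_of_Dmat_ne_zero G h' with hc | hc
  · rw [add_comm]
    exact neg_one_pow_pred_add_neg_one_pow_pred (Finset.card_pos.mpr s.2.1) hc
  · exact neg_one_pow_pred_add_neg_one_pow_pred (Finset.card_pos.mpr t.2.1) hc

theorem mcKeanSinger_general (f : ℝ → ℂ) (hf0 : f 0 = 0)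
    (U : Matrix (Simp G) (Simp G) ℝ) (lam : Simp G → ℝ)
    (hU : Uᵀ * U = 1) (hD : Dmat G = Uᵀ * Matrix.diagonal lam * U) :
    str G (NormedSpace.exp
        ((U.map ((↑·) : ℝ → ℂ))ᵀ * Matrix.diagonal (fun s => f (lam s)) *
          U.map ((↑·) : ℝ → ℂ))) = (chi G : ℂ) := by
  rw [show (fun x : ℝ => (x : ℂ)) = Complex.ofRealHom from rfl]
  have hUc : (U.map Complex.ofRealHom)ᵀ * U.map Complex.ofRealHom = 1 := by
    rw [← transpose_map, ← Matrix.map_mul, hU, Matrix.map_one _ (map_zero _) (map_one _)]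
  have hDc : (Dmat G).map Complex.ofRealHom = (U.map Complex.ofRealHom)ᵀ *
      diagonal (fun s => (lam s : ℂ)) * U.map Complex.ofRealHom := by
    rw [hD, Matrix.map_mul, Matrix.map_mul, transpose_map, diagonal_map (map_zero _)]
    rfl
  rw [str_eq_trace_grading_mul, trace_mul_exp_conj_diagonal_eq_trace hUc hDc
    (grading_mul_add_mul_grading G Complex.ofRealHom) fun s hs => ?_, trace_grading]
  rw [Complex.ofReal_eq_zero.mp hs, hf0]
end

section
/- The spectrum of the Dirac operator D is symmetric about 0: for every real number λ, the dimension of the eigenspace of D for the eigenvalue λ equals the dimension of the eigenspace of D for the eigenvalue −λ. In particular the sum of the eigenvalues of D, counted with multiplicity, is 0. -/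
/-!
Since `d` maps `k`-forms to `(k+1)`-forms, `D = d + d*` only connects forms of adjacent
degrees, so the involutive grading `γ = (-1)^k` anticommutes with `D`. Hence `γ` maps the
`λ`-eigenspace of `D` isomorphically onto the `(-λ)`-eigenspace. The diagonal of `D` vanishes,
so the eigenvalues sum to `tr D = 0`.
-/

open Matrix Finset BigOperators

variable {V : Type*} [Fintype V] [LinearOrder V]

variable (G : SimpleGraph V) [DecidableRel G.Adj]

namespace Module.End

variable {R M : Type*} [CommRing R] [AddCommGroup M] [Module R M]

theorem apply_mem_eigenspace_neg_iff_of_anticommute {f : End R M} {e : M ≃ₗ[R] M}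
    (h : ∀ x, f (e x) = -e (f x)) {μ : R} {x : M} :
    e x ∈ eigenspace f (-μ) ↔ x ∈ eigenspace f μ := by
  rw [mem_eigenspace_iff, mem_eigenspace_iff, h, neg_smul, neg_inj, ← map_smul,
    e.injective.eq_iff]

theorem map_eigenspace_of_anticommute {f : End R M} {e : M ≃ₗ[R] M}
    (h : ∀ x, f (e x) = -e (f x)) (μ : R) :
    (eigenspace f μ).map (e : M →ₗ[R] M) = eigenspace f (-μ) := by
  ext y
  rw [Submodule.mem_map_equiv, ← apply_mem_eigenspace_neg_iff_of_anticommute h,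
    LinearEquiv.apply_symm_apply]

theorem finrank_eigenspace_neg_of_anticommute [StrongRankCondition R] {f : End R M}
    {e : M ≃ₗ[R] M} (h : ∀ x, f (e x) = -e (f x)) (μ : R) :
    Module.finrank R (eigenspace f μ) = Module.finrank R (eigenspace f (-μ)) := by
  rw [← map_eigenspace_of_anticommute h, LinearEquiv.finrank_map_eq]

end Module.End

section Grading

variable {V : Type*} [LinearOrder V]

theorem dEntry_eq_zero_of_card_ne {t s : Finset V} (h : #s + 1 ≠ #t) : dEntry t s = 0 :=
  Finset.sum_eq_zero fun v hv => if_neg fun hs => h (by rw [hs, Finset.card_erase_add_one hv])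

theorem dEntry_self (t : Finset V) : dEntry t t = 0 :=
  dEntry_eq_zero_of_card_ne (Nat.succ_ne_self _)

/-- `d` raises the degree by one, so it flips the sign `(-1)^#s`. -/
theorem neg_one_pow_card_mul_dEntry (t s : Finset V) :
    (-1 : ℝ) ^ #t * dEntry t s = -((-1) ^ #s * dEntry t s) := by
  by_cases h : #s + 1 = #t
  · rw [← h, pow_succ]
    ring
  · rw [dEntry_eq_zero_of_card_ne h]
    ring

variable [Fintype V] (G : SimpleGraph V) [DecidableRel G.Adj]

/-- The grading `(-1)^k` on `Ω_k`, up to a global sign: a `k`-simplex has `k + 1` vertices. -/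
def gradingMat : Matrix (Simp G) (Simp G) ℝ := diagonal fun a => (-1) ^ #a.1

theorem gradingMat_mul_self : gradingMat G * gradingMat G = 1 := by
  simp only [gradingMat, diagonal_mul_diagonal, ← pow_add, ← two_mul, pow_mul, neg_one_sq,
    one_pow, diagonal_one]

theorem Dmat_mul_gradingMat : Dmat G * gradingMat G = -(gradingMat G * Dmat G) := by
  ext a b
  simp only [gradingMat, Dmat, dTot, Matrix.neg_apply, diagonal_mul, mul_diagonal,
    Matrix.add_apply, transpose_apply]
  linear_combination neg_one_pow_card_mul_dEntry a.1 b.1 +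
    neg_one_pow_card_mul_dEntry b.1 a.1

theorem trace_Dmat : (Dmat G).trace = 0 :=
  Finset.sum_eq_zero fun a _ => by simp [Dmat, dTot, dEntry_self]

end Grading

/-- The spectrum of the Dirac operator `D` is symmetric about `0`: the eigenspaces of `D` for
`λ` and `−λ` have the same dimension; in particular the sum of the eigenvalues of `D`,
counted with multiplicity, is `0`. -/
theorem dirac_spectrum_symmetric (hD : (Dmat G).IsHermitian) :
    (∀ lam : ℝ,
      Module.finrank ℝ (Module.End.eigenspace (Dmat G).mulVecLin lam) =
        Module.finrank ℝ (Module.End.eigenspace (Dmat G).mulVecLin (-lam))) ∧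
    ∑ i, hD.eigenvalues i = 0 := by
  let γ := LinearEquiv.ofInvolutive (gradingMat G).mulVecLin fun x => by
    simp [mulVec_mulVec, gradingMat_mul_self]
  have hγ : ∀ x, (Dmat G).mulVecLin (γ x) = -γ ((Dmat G).mulVecLin x) := fun x => by
    show Dmat G *ᵥ (gradingMat G *ᵥ x) = -(gradingMat G *ᵥ (Dmat G *ᵥ x))
    rw [mulVec_mulVec, mulVec_mulVec, ← neg_mulVec, Dmat_mul_gradingMat]
  refine ⟨Module.End.finrank_eigenspace_neg_of_anticommute hγ, ?_⟩
  simpa [trace_Dmat] using hD.trace_eq_sum_eigenvalues.symm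
end

section
/- Let deg denote the maximal vertex degree of G. Every eigenvalue λ of the Dirac operator D satisfies λ² ≤ 2·deg, so that every eigenvalue of L = D² lies in the interval [0, 2·deg]; moreover the average (1/v)·Σ_{i=1}^{v} λ_i² of the squares of the eigenvalues of D (listed with multiplicity) is at most 2·deg. -/
open Matrix Finset BigOperators

variable {V : Type*} [Fintype V] [LinearOrder V]

variable (G : SimpleGraph V) [DecidableRel G.Adj]

/-!
Since `d ∘ d = 0`, `D² = d dᵀ + dᵀ d`, and by Gershgorin's theorem every eigenvalue of `D²` is at
most a row sum `L t t + ∑ s ≠ t, |L t s|`. The diagonal entry counts the faces of `t` (none if `t`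
is a vertex) and the cofaces `t ∪ {b}`. An off-diagonal entry is `0` or `±1`, and nonzero only if
`s = (t \ {a}) ∪ {b}`; if moreover `t` has at least two vertices and `b` is adjacent to all of
`t`, the contributions of the common face `t \ {a}` and of the common coface `t ∪ {b}` cancel.
For `x ∈ t`, the vertices of `t \ {x}`, the apexes `b` of the cofaces and the vertices `b` of the
surviving exchanges with `a ≠ x` are distinct neighbours of `x`. Hence the row sum is at most
`2 deg x` if `t = {x}`, and at most `deg x + deg y` for any two vertices `x ≠ y` of `t` otherwise.
Finally, `λ²` is an eigenvalue of `D²` for every eigenvalue `λ` of `D`, and `D² = Dᵀ D` is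
positive semidefinite.
-/

theorem sum_sum_erase_eq_zero_of_antisymm {α M : Type*} [DecidableEq α] [AddCommGroup M]
    [IsAddTorsionFree M] {s : Finset α} {f : α → α → M}
    (hf : ∀ v ∈ s, ∀ w ∈ s, v ≠ w → f w v = -f v w) :
    ∑ v ∈ s, ∑ w ∈ s.erase v, f v w = 0 := by
  refine self_eq_neg.mp ?_
  calc ∑ v ∈ s, ∑ w ∈ s.erase v, f v w
      = ∑ w ∈ s, ∑ v ∈ s.erase w, f v w :=
        Finset.sum_comm' fun v w => by simp only [Finset.mem_erase]; tauto
    _ = -∑ v ∈ s, ∑ w ∈ s.erase v, f v w := by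
        simp only [← Finset.sum_neg_distrib]
        refine Finset.sum_congr rfl fun w hw => Finset.sum_congr rfl fun v hv => ?_
        exact hf w hw v (Finset.mem_of_mem_erase hv) (Finset.ne_of_mem_erase hv).symm

theorem card_le_card_of_forall_val_mem_image {α β : Type*} [DecidableEq α] {p : α → Prop}
    {s : Finset (Subtype p)} {T : Finset β} {φ : β → α} (h : ∀ u ∈ s, u.1 ∈ T.image φ) :
    #s ≤ #T :=
  (card_le_card_of_injOn Subtype.val h Subtype.val_injective.injOn).trans card_image_le

theorem sum_le_card_filter_ne_zero {ι R : Type*} [AddCommMonoidWithOne R] [PartialOrder R]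
    [AddLeftMono R] [DecidableEq R] {s : Finset ι} {f : ι → R} (hf : ∀ i ∈ s, f i ≤ 1) :
    ∑ i ∈ s, f i ≤ #{i ∈ s | f i ≠ 0} := by
  rw [← Finset.sum_filter_ne_zero]
  simpa using Finset.sum_le_card_nsmul _ f 1 fun i hi => hf i (Finset.mem_filter.mp hi).1

theorem abs_sum_le_one_of_subsingleton_support {ι R : Type*} [Fintype ι] [Ring R]
    [LinearOrder R] [IsOrderedRing R] {f : ι → R} (hf : ∀ i, |f i| ≤ 1)
    (hsupp : ∀ i j, f i ≠ 0 → f j ≠ 0 → i = j) : |∑ i, f i| ≤ 1 := by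
  classical
  calc |∑ i, f i| ≤ ∑ i, |f i| := Finset.abs_sum_le_sum_abs _ _
    _ ≤ #{i | |f i| ≠ 0} := sum_le_card_filter_ne_zero fun i _ => hf i
    _ ≤ 1 := by
      rw [← Nat.cast_one]
      exact Nat.mono_cast <| Finset.card_le_one.mpr fun i hi j hj =>
        hsupp i j (by simpa using hi) (by simpa using hj)

theorem le_of_mem_spectrum_of_row_sum_le {n : Type*} [Fintype n] [DecidableEq n]
    {A : Matrix n n ℝ} {c : ℝ} (h : ∀ i, A i i + ∑ j ∈ univ.erase i, |A i j| ≤ c) {μ : ℝ}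
    (hμ : μ ∈ spectrum ℝ A) : μ ≤ c := by
  rw [← Matrix.spectrum_toLin', ← Module.End.hasEigenvalue_iff_mem_spectrum] at hμ
  obtain ⟨k, hk⟩ := eigenvalue_mem_ball hμ
  rw [Metric.mem_closedBall, Real.dist_eq] at hk
  simp only [Real.norm_eq_abs] at hk
  linarith [(abs_le.mp hk).2, h k]

section Incidence

variable {α : Type*} [LinearOrder α] {t s : Finset α} {v w : α}

theorem dEntry_erase (hv : v ∈ t) : dEntry t (t.erase v) = (-1) ^ #{u ∈ t | u < v} := by
  rw [dEntry, Finset.sum_eq_single v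
    (fun w _ hwv => if_neg fun h => hwv ((t.erase_inj hv).mp h).symm) (absurd hv)]
  simp

theorem exists_eq_erase_of_dEntry_ne_zero (h : dEntry t s ≠ 0) : ∃ v ∈ t, s = t.erase v := by
  contrapose! h
  exact Finset.sum_eq_zero fun v hv => if_neg (h v hv)

theorem dEntry_erase_mul_self (hv : v ∈ t) : dEntry t (t.erase v) * dEntry t (t.erase v) = 1 := by
  rw [dEntry_erase hv, ← pow_add, Even.neg_one_pow ⟨_, rfl⟩]

theorem abs_dEntry_le_one (t s : Finset α) : |dEntry t s| ≤ 1 := by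
  by_cases h : dEntry t s = 0
  · simp [h]
  · obtain ⟨v, hv, rfl⟩ := exists_eq_erase_of_dEntry_ne_zero h
    simp [dEntry_erase hv]

theorem abs_dEntry_mul_dEntry_le_one (a b c d : Finset α) :
    |dEntry a b * dEntry c d| ≤ 1 := by
  rw [abs_mul]
  exact mul_le_one₀ (abs_dEntry_le_one a b) (abs_nonneg _) (abs_dEntry_le_one c d)

theorem sum_dEntry_mul [Fintype α] (t : Finset α) (g : Finset α → ℝ) :
    ∑ u, dEntry t u * g u = ∑ v ∈ t, dEntry t (t.erase v) * g (t.erase v) := calc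
  _ = ∑ v ∈ t, ∑ u, if u = t.erase v then (-1) ^ #{w ∈ t | w < v} * g u else 0 := by
    simp only [dEntry, Finset.sum_mul, ite_mul, zero_mul]
    exact Finset.sum_comm
  _ = _ := Finset.sum_congr rfl fun v hv => by
    rw [Finset.sum_ite_eq' .., if_pos (Finset.mem_univ _), dEntry_erase hv]

theorem card_filter_erase_lt (hv : v ∈ t) (hvw : v < w) :
    #{u ∈ t.erase v | u < w} + 1 = #{u ∈ t | u < w} := by
  rw [Finset.filter_erase]
  exact Finset.card_erase_add_one (Finset.mem_filter.mpr ⟨hv, hvw⟩)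

theorem card_filter_erase_lt_of_le (hwv : w ≤ v) :
    #{u ∈ t.erase v | u < w} = #{u ∈ t | u < w} := by
  rw [Finset.filter_erase, Finset.erase_eq_of_notMem]
  exact fun h => (Finset.mem_filter.mp h).2.not_ge hwv

theorem dEntry_erase_mul_dEntry_erase_comm (hv : v ∈ t) (hw : w ∈ t) (hvw : v ≠ w) :
    dEntry t (t.erase w) * dEntry (t.erase w) ((t.erase w).erase v) =
      -(dEntry t (t.erase v) * dEntry (t.erase v) ((t.erase v).erase w)) := by
  wlog hlt : v < w generalizing v w
  · rw [this hw hv hvw.symm (lt_of_le_of_ne (not_lt.mp hlt) hvw.symm), neg_neg]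
  rw [dEntry_erase hw, dEntry_erase hv, dEntry_erase (Finset.mem_erase.mpr ⟨hvw, hv⟩),
    dEntry_erase (Finset.mem_erase.mpr ⟨hvw.symm, hw⟩), card_filter_erase_lt_of_le hlt.le,
    ← card_filter_erase_lt hv hlt, pow_succ]
  ring

theorem sum_dEntry_mul_dEntry [Fintype α] (t s : Finset α) :
    ∑ u, dEntry t u * dEntry u s = 0 := by
  have hs : ∀ r, dEntry r s = ∑ u, dEntry r u * if u = s then 1 else 0 := fun r => by simp
  rw [sum_dEntry_mul]
  simp only [hs, sum_dEntry_mul, Finset.mul_sum, ← mul_assoc]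
  apply sum_sum_erase_eq_zero_of_antisymm
  intro v hv w hw hvw
  rw [dEntry_erase_mul_dEntry_erase_comm hv hw hvw, Finset.erase_right_comm, neg_mul]

theorem dEntry_erase_erase_mul_add_dEntry_erase_mul_eq_zero {w : Finset α} {a b : α} (ha : a ∈ w)
    (hb : b ∈ w) (hab : a ≠ b) :
    dEntry (w.erase b) ((w.erase b).erase a) * dEntry (w.erase a) ((w.erase a).erase b) +
      dEntry w (w.erase b) * dEntry w (w.erase a) = 0 := by
  have hsign := dEntry_erase_mul_dEntry_erase_comm ha hb hab
  have hb' := dEntry_erase_mul_self hb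
  have ha' := dEntry_erase_mul_self (Finset.mem_erase.mpr ⟨hab.symm, hb⟩)
  linear_combination (dEntry (w.erase a) ((w.erase a).erase b) * dEntry w (w.erase b)) * hsign
    - dEntry (w.erase b) ((w.erase b).erase a) * dEntry (w.erase a) ((w.erase a).erase b) * hb'
    - dEntry w (w.erase b) * dEntry w (w.erase a) * ha'

theorem eq_inter_of_dEntry_ne_zero {t s u : Finset α} (hts : t ≠ s)
    (ht : dEntry t u ≠ 0) (hs : dEntry s u ≠ 0) : u = t ∩ s := by
  obtain ⟨a, ha, rfl⟩ := exists_eq_erase_of_dEntry_ne_zero ht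
  obtain ⟨b, hb, hab⟩ := exists_eq_erase_of_dEntry_ne_zero hs
  have hne : a ≠ b := by
    rintro rfl
    exact hts (by rw [← Finset.insert_erase ha, hab, Finset.insert_erase hb])
  ext x
  have := congrArg (x ∈ ·) hab
  simp only [Finset.mem_erase, Finset.mem_inter] at this ⊢
  grind

theorem eq_union_of_dEntry_ne_zero {t s u : Finset α} (hts : t ≠ s)
    (ht : dEntry u t ≠ 0) (hs : dEntry u s ≠ 0) : u = t ∪ s := by
  obtain ⟨b, hb, rfl⟩ := exists_eq_erase_of_dEntry_ne_zero ht
  obtain ⟨a, ha, rfl⟩ := exists_eq_erase_of_dEntry_ne_zero hs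
  have hne : a ≠ b := by rintro rfl; exact hts rfl
  ext x
  simp only [Finset.mem_erase, Finset.mem_union]
  grind

end Incidence

section Simplices

variable {G}

theorem Simp.isClique (t : Simp G) : G.IsClique (t.1 : Set V) :=
  (G.mem_cliqueFinset_iff.mp t.2.2).isClique

theorem mem_simp_of_isClique {u : Finset V} (hne : u.Nonempty) (hu : G.IsClique (u : Set V)) :
    u.Nonempty ∧ u ∈ G.cliqueFinset u.card :=
  ⟨hne, G.mem_cliqueFinset_iff.mpr ⟨hu, rfl⟩⟩

theorem mem_simp_of_subset (t : Simp G) {u : Finset V} (hu : u ⊆ t.1) (hne : u.Nonempty) :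
    u.Nonempty ∧ u ∈ G.cliqueFinset u.card :=
  mem_simp_of_isClique hne ((Simp.isClique t).subset (by exact_mod_cast hu))

theorem dTot_apply (t s : Simp G) : dTot G t s = dEntry t.1 s.1 := rfl

theorem dTot_mul_dTot : dTot G * dTot G = 0 := by
  ext t s
  have hvanish (u : {u : Finset V // ¬(u.Nonempty ∧ u ∈ G.cliqueFinset u.card)}) :
      dEntry t.1 u.1 * dEntry u.1 s.1 = 0 := by
    by_contra hne
    obtain ⟨v, -, hv⟩ := exists_eq_erase_of_dEntry_ne_zero (left_ne_zero_of_mul hne)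
    obtain ⟨w, hw, -⟩ := exists_eq_erase_of_dEntry_ne_zero (right_ne_zero_of_mul hne)
    exact u.2 (mem_simp_of_subset t (hv ▸ Finset.erase_subset v _) ⟨w, hw⟩)
  have h := sum_dEntry_mul_dEntry t.1 s.1
  rw [← Fintype.sum_subtype_add_sum_subtype (fun u => u.Nonempty ∧ u ∈ G.cliqueFinset u.card),
    Finset.sum_eq_zero fun u _ => hvanish u, add_zero] at h
  simpa [mul_apply, dTot_apply] using h

end Simplices

def downLaplacian : Matrix (Simp G) (Simp G) ℝ := dTot G * (dTot G)ᵀ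

def upLaplacian : Matrix (Simp G) (Simp G) ℝ := (dTot G)ᵀ * dTot G

/-- For a simplex `t`, the vertices `b` such that `t ∪ {b}` is a simplex. -/
def coneVertices (t : Finset V) : Finset V := {b | b ∉ t ∧ ∀ c ∈ t, G.Adj b c}

/-- For a simplex `t` and `a ∈ t`, the vertices `b` such that `(t \ {a}) ∪ {b}` is a simplex but
`t ∪ {b}` is not. -/
def exchangeVertices (t : Finset V) (a : V) : Finset V :=
  {b | b ∉ t ∧ ¬G.Adj b a ∧ ∀ c ∈ t.erase a, G.Adj b c}

section Neighbours

variable {G}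

theorem mem_coneVertices {t : Finset V} {b : V} :
    b ∈ coneVertices G t ↔ b ∉ t ∧ ∀ c ∈ t, G.Adj b c := by
  simp [coneVertices]

theorem mem_exchangeVertices {t : Finset V} {a b : V} :
    b ∈ exchangeVertices G t a ↔ b ∉ t ∧ ¬G.Adj b a ∧ ∀ c ∈ t.erase a, G.Adj b c := by
  simp [exchangeVertices]

theorem card_erase_add_card_coneVertices_add_sum_le_degree {t : Finset V}
    (ht : G.IsClique (t : Set V)) {x : V} (hx : x ∈ t) :
    #(t.erase x) + #(coneVertices G t) + ∑ a ∈ t.erase x, #(exchangeVertices G t a) ≤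
      G.degree x := by
  have hK : ∀ a ∈ t.erase x, ∀ a' ∈ t.erase x, a ≠ a' →
      Disjoint (exchangeVertices G t a) (exchangeVertices G t a') := by
    intro a ha a' _ haa'
    refine Finset.disjoint_left.mpr fun b hb hb' => ?_
    rw [mem_exchangeVertices] at hb hb'
    exact hb.2.1 (hb'.2.2 a (Finset.mem_erase.mpr ⟨haa', Finset.mem_of_mem_erase ha⟩))
  have hdisj1 : Disjoint (coneVertices G t) ((t.erase x).biUnion (exchangeVertices G t)) := by
    refine Finset.disjoint_left.mpr fun b hb hb' => ?_
    obtain ⟨a, ha, hb'⟩ := Finset.mem_biUnion.mp hb'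
    exact (mem_exchangeVertices.mp hb').2.1
      ((mem_coneVertices.mp hb).2 a (Finset.mem_of_mem_erase ha))
  have hdisj2 : Disjoint (t.erase x)
      (coneVertices G t ∪ (t.erase x).biUnion (exchangeVertices G t)) := by
    refine Finset.disjoint_left.mpr fun b hb hb' => ?_
    simp only [Finset.mem_union, Finset.mem_biUnion, mem_coneVertices, mem_exchangeVertices]
      at hb'
    have := Finset.mem_of_mem_erase hb
    grind
  rw [add_assoc, ← Finset.card_biUnion hK, ← Finset.card_union_of_disjoint hdisj1,
    ← Finset.card_union_of_disjoint hdisj2]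
  refine Finset.card_le_card fun b hb => ?_
  rw [SimpleGraph.mem_neighborFinset]
  simp only [Finset.mem_union, Finset.mem_biUnion, mem_coneVertices, mem_exchangeVertices]
    at hb
  rcases hb with hb | ⟨-, hb⟩ | ⟨a, ha, -, -, hb⟩
  · exact ht hx (Finset.mem_of_mem_erase hb) (Finset.ne_of_mem_erase hb).symm
  · exact (hb x hx).symm
  · exact (hb x (Finset.mem_erase.mpr ⟨(Finset.ne_of_mem_erase ha).symm, hx⟩)).symm

theorem card_add_card_coneVertices_add_sum_le_two_mul_maxDegree {t : Finset V}
    (ht : G.IsClique (t : Set V)) (h2 : 2 ≤ #t) :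
    #t + #(coneVertices G t) + ∑ a ∈ t, #(exchangeVertices G t a) ≤ 2 * G.maxDegree := by
  obtain ⟨x, hx, y, hy, hxy⟩ := Finset.one_lt_card.mp h2
  have hdegx := card_erase_add_card_coneVertices_add_sum_le_degree ht hx
  have hdegy := card_erase_add_card_coneVertices_add_sum_le_degree ht hy
  have hxy' : #(exchangeVertices G t x) ≤ ∑ a ∈ t.erase y, #(exchangeVertices G t a) :=
    Finset.single_le_sum (f := fun a => #(exchangeVertices G t a)) (fun _ _ => Nat.zero_le _)
      (Finset.mem_erase.mpr ⟨hxy, hx⟩)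
  have hsplit := Finset.add_sum_erase t (fun a => #(exchangeVertices G t a)) hx
  have := Finset.card_erase_add_one hx
  have := Finset.card_erase_add_one hy
  have := G.degree_le_maxDegree x
  have := G.degree_le_maxDegree y
  omega

end Neighbours

section Laplacians

variable {G} {t s : Simp G}

theorem downLaplacian_apply (t s : Simp G) :
    downLaplacian G t s = ∑ u : Simp G, dEntry t.1 u.1 * dEntry s.1 u.1 := rfl

theorem upLaplacian_apply (t s : Simp G) :
    upLaplacian G t s = ∑ u : Simp G, dEntry u.1 t.1 * dEntry u.1 s.1 := rfl

theorem Dmat_mul_self : Dmat G * Dmat G = downLaplacian G + upLaplacian G := by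
  have h : (dTot G)ᵀ * (dTot G)ᵀ = 0 := by rw [← transpose_mul, dTot_mul_dTot, transpose_zero]
  rw [Dmat, downLaplacian, upLaplacian, add_mul, mul_add, mul_add, dTot_mul_dTot, h]
  abel

theorem abs_downLaplacian_apply_le_one (hts : t ≠ s) : |downLaplacian G t s| ≤ 1 := by
  have hts' : t.1 ≠ s.1 := Subtype.coe_ne_coe.mpr hts
  refine abs_sum_le_one_of_subsingleton_support (fun u => abs_dEntry_mul_dEntry_le_one ..)
    fun _ _ hu hv => Subtype.ext ?_
  rw [eq_inter_of_dEntry_ne_zero hts' (left_ne_zero_of_mul hu) (right_ne_zero_of_mul hu),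
    eq_inter_of_dEntry_ne_zero hts' (left_ne_zero_of_mul hv) (right_ne_zero_of_mul hv)]

theorem abs_upLaplacian_apply_le_one (hts : t ≠ s) : |upLaplacian G t s| ≤ 1 := by
  have hts' : t.1 ≠ s.1 := Subtype.coe_ne_coe.mpr hts
  refine abs_sum_le_one_of_subsingleton_support (fun u => abs_dEntry_mul_dEntry_le_one ..)
    fun _ _ hu hv => Subtype.ext ?_
  rw [eq_union_of_dEntry_ne_zero hts' (left_ne_zero_of_mul hu) (right_ne_zero_of_mul hu),
    eq_union_of_dEntry_ne_zero hts' (left_ne_zero_of_mul hv) (right_ne_zero_of_mul hv)]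

theorem downLaplacian_apply_of_eq_inter {r : Simp G} (hts : t ≠ s) (hr : r.1 = t.1 ∩ s.1) :
    downLaplacian G t s = dEntry t.1 r.1 * dEntry s.1 r.1 :=
  Fintype.sum_eq_single r fun _ hu => by_contra fun h => hu <| Subtype.ext <|
    (eq_inter_of_dEntry_ne_zero (Subtype.coe_ne_coe.mpr hts) (left_ne_zero_of_mul h)
      (right_ne_zero_of_mul h)).trans hr.symm

theorem upLaplacian_apply_of_eq_union {w : Simp G} (hts : t ≠ s) (hw : w.1 = t.1 ∪ s.1) :
    upLaplacian G t s = dEntry w.1 t.1 * dEntry w.1 s.1 :=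
  Fintype.sum_eq_single w fun _ hu => by_contra fun h => hu <| Subtype.ext <|
    (eq_union_of_dEntry_ne_zero (Subtype.coe_ne_coe.mpr hts) (left_ne_zero_of_mul h)
      (right_ne_zero_of_mul h)).trans hw.symm

theorem exists_exchange_of_downLaplacian_apply_ne_zero (hts : t ≠ s)
    (h : downLaplacian G t s ≠ 0) :
    2 ≤ #t.1 ∧ ∃ a ∈ t.1, ∃ b ∉ t.1, s.1 = insert b (t.1.erase a) := by
  obtain ⟨u, -, hu⟩ := Finset.exists_ne_zero_of_sum_ne_zero h
  obtain ⟨a, ha, hua⟩ := exists_eq_erase_of_dEntry_ne_zero (left_ne_zero_of_mul hu)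
  obtain ⟨b, hb, hub⟩ := exists_eq_erase_of_dEntry_ne_zero (right_ne_zero_of_mul hu)
  have hab : a ≠ b := by
    rintro rfl
    exact hts (Subtype.ext (by rw [← Finset.insert_erase ha, ← hua, hub, Finset.insert_erase hb]))
  refine ⟨?_, a, ha, b, fun hbt => ?_, ?_⟩
  · have h1 := Finset.card_erase_add_one ha
    have h2 := u.2.1.card_pos
    rw [← hua] at h1
    omega
  · have : b ∈ u.1 := hua ▸ Finset.mem_erase.mpr ⟨hab.symm, hbt⟩
    exact Finset.notMem_erase b s.1 (hub ▸ this)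
  · rw [← hua, hub, Finset.insert_erase hb]

theorem exists_exchange_of_upLaplacian_apply_ne_zero (hts : t ≠ s) (h : upLaplacian G t s ≠ 0) :
    ∃ a ∈ t.1, ∃ b ∉ t.1, s.1 = insert b (t.1.erase a) ∧ ∀ c ∈ t.1, G.Adj b c := by
  obtain ⟨u, -, hu⟩ := Finset.exists_ne_zero_of_sum_ne_zero h
  obtain ⟨b, hb, hbt⟩ := exists_eq_erase_of_dEntry_ne_zero (left_ne_zero_of_mul hu)
  obtain ⟨a, ha, has⟩ := exists_eq_erase_of_dEntry_ne_zero (right_ne_zero_of_mul hu)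
  have hab : a ≠ b := by
    rintro rfl
    exact hts (Subtype.ext (hbt.trans has.symm))
  refine ⟨a, hbt ▸ Finset.mem_erase.mpr ⟨hab, ha⟩, b, hbt ▸ Finset.notMem_erase b u.1, ?_,
    fun c hc => Simp.isClique u hb (Finset.mem_of_mem_erase (hbt ▸ hc : c ∈ u.1.erase b)) ?_⟩
  · rw [has, hbt, Finset.erase_right_comm,
      Finset.insert_erase (Finset.mem_erase.mpr ⟨hab.symm, hb⟩)]
  · rintro rfl
    exact Finset.notMem_erase b u.1 (hbt ▸ hc)

/-- The common face `t \ {a}` and the common coface `t ∪ {b}` of `t` and `s` contribute with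
opposite signs. -/
theorem downLaplacian_add_upLaplacian_apply_eq_zero {a b : V} (ha : a ∈ t.1) (hb : b ∉ t.1)
    (hs : s.1 = insert b (t.1.erase a)) (ht : 2 ≤ #t.1) (hadj : ∀ c ∈ t.1, G.Adj b c) :
    downLaplacian G t s + upLaplacian G t s = 0 := by
  have hab : a ≠ b := fun h => hb (h ▸ ha)
  have has : a ∉ s.1 := by simp [hs, hab]
  have hts : t ≠ s := by
    rintro rfl
    exact has ha
  let r : Simp G := ⟨t.1.erase a, mem_simp_of_subset t (Finset.erase_subset a _)
    (Finset.card_pos.mp (by rw [Finset.card_erase_of_mem ha]; omega))⟩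
  let w : Simp G := ⟨insert b t.1, mem_simp_of_isClique (Finset.insert_nonempty b _)
    (by rw [Finset.coe_insert]; exact (Simp.isClique t).insert fun c hc _ => hadj c hc)⟩
  have hr : r.1 = t.1 ∩ s.1 := by
    ext c
    simp only [r, hs, Finset.mem_erase, Finset.mem_inter, Finset.mem_insert]
    grind
  have hw : w.1 = t.1 ∪ s.1 := by
    ext c
    simp only [w, hs, Finset.mem_erase, Finset.mem_union, Finset.mem_insert]
    grind
  rw [downLaplacian_apply_of_eq_inter hts hr, upLaplacian_apply_of_eq_union hts hw]
  have key := dEntry_erase_erase_mul_add_dEntry_erase_mul_eq_zero (w := w.1)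
    (Finset.mem_insert_of_mem ha) (Finset.mem_insert_self b _) hab
  have htw : w.1.erase b = t.1 := Finset.erase_insert hb
  have hsw : w.1.erase a = s.1 := by rw [hs, Finset.erase_insert_of_ne hab.symm]
  have hsr : s.1.erase b = r.1 := by
    rw [hs, Finset.erase_insert fun h => hb (Finset.mem_of_mem_erase h)]
  rwa [htw, hsw, hsr] at key

theorem downLaplacian_apply_eq_zero_of_card_eq_one (ht : #t.1 = 1) (s : Simp G) :
    downLaplacian G t s = 0 :=
  Finset.sum_eq_zero fun u _ => by
    by_contra h
    obtain ⟨a, ha, hu⟩ := exists_eq_erase_of_dEntry_ne_zero (left_ne_zero_of_mul h)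
    have := u.2.1.card_pos
    rw [hu, Finset.card_erase_of_mem ha, ht] at this
    exact this.false

theorem downLaplacian_apply_self_le (t : Simp G) : downLaplacian G t t ≤ #t.1 := by
  rw [downLaplacian_apply]
  refine (sum_le_card_filter_ne_zero fun u _ => (le_abs_self _).trans
    (abs_dEntry_mul_dEntry_le_one ..)).trans (Nat.cast_le.mpr ?_)
  refine card_le_card_of_forall_val_mem_image (φ := t.1.erase) fun u hu => ?_
  obtain ⟨a, ha, hu⟩ := exists_eq_erase_of_dEntry_ne_zero
    (left_ne_zero_of_mul (Finset.mem_filter.mp hu).2)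
  exact Finset.mem_image.mpr ⟨a, ha, hu.symm⟩

theorem upLaplacian_apply_self_le (t : Simp G) : upLaplacian G t t ≤ #(coneVertices G t.1) := by
  rw [upLaplacian_apply]
  refine (sum_le_card_filter_ne_zero fun u _ => (le_abs_self _).trans
    (abs_dEntry_mul_dEntry_le_one ..)).trans (Nat.cast_le.mpr ?_)
  refine card_le_card_of_forall_val_mem_image (φ := (insert · t.1)) fun u hu => ?_
  obtain ⟨b, hb, hu⟩ := exists_eq_erase_of_dEntry_ne_zero
    (left_ne_zero_of_mul (Finset.mem_filter.mp hu).2)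
  have hbt : b ∉ t.1 := hu ▸ Finset.notMem_erase b u.1
  refine Finset.mem_image.mpr ⟨b, ?_, by rw [hu, Finset.insert_erase hb]⟩
  refine Finset.mem_filter.mpr ⟨Finset.mem_univ _, hbt, fun c hc => Simp.isClique u hb ?_ ?_⟩
  · exact Finset.mem_of_mem_erase (hu ▸ hc : c ∈ u.1.erase b)
  · rintro rfl
    exact hbt hc

theorem abs_laplacian_apply_le_one (hts : t ≠ s) :
    |downLaplacian G t s + upLaplacian G t s| ≤ 1 := by
  by_cases hup : upLaplacian G t s = 0
  · rw [hup, add_zero]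
    exact abs_downLaplacian_apply_le_one hts
  by_cases hdown : downLaplacian G t s = 0
  · rw [hdown, zero_add]
    exact abs_upLaplacian_apply_le_one hts
  obtain ⟨a, ha, b, hb, hs, hadj⟩ := exists_exchange_of_upLaplacian_apply_ne_zero hts hup
  rw [downLaplacian_add_upLaplacian_apply_eq_zero ha hb hs
    (exists_exchange_of_downLaplacian_apply_ne_zero hts hdown).1 hadj, abs_zero]
  exact zero_le_one

theorem card_laplacian_support_le_of_card_eq_one (ht : #t.1 = 1) :
    #{s ∈ univ.erase t | downLaplacian G t s + upLaplacian G t s ≠ 0} ≤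
      #(coneVertices G t.1) := by
  obtain ⟨x, hx⟩ := Finset.card_eq_one.mp ht
  refine card_le_card_of_forall_val_mem_image (φ := fun b => insert b (t.1.erase x))
    fun s hs => ?_
  obtain ⟨hst, hL⟩ := Finset.mem_filter.mp hs
  rw [downLaplacian_apply_eq_zero_of_card_eq_one ht, zero_add] at hL
  obtain ⟨a, ha, b, hb, hs, hadj⟩ :=
    exists_exchange_of_upLaplacian_apply_ne_zero (Finset.ne_of_mem_erase hst).symm hL
  obtain rfl : a = x := Finset.mem_singleton.mp (hx ▸ ha)
  exact Finset.mem_image.mpr ⟨b, Finset.mem_filter.mpr ⟨Finset.mem_univ _, hb, hadj⟩, hs.symm⟩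

theorem card_laplacian_support_le_of_two_le_card (ht : 2 ≤ #t.1) :
    #{s ∈ univ.erase t | downLaplacian G t s + upLaplacian G t s ≠ 0} ≤
      ∑ a ∈ t.1, #(exchangeVertices G t.1 a) := by
  refine (card_le_card_of_forall_val_mem_image (T := t.1.sigma (exchangeVertices G t.1))
    (φ := fun p => insert p.2 (t.1.erase p.1)) fun s hs => ?_).trans_eq (Finset.card_sigma _ _)
  obtain ⟨hst, hL⟩ := Finset.mem_filter.mp hs
  have hts : t ≠ s := (Finset.ne_of_mem_erase hst).symm
  have hup : upLaplacian G t s = 0 := by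
    by_contra hup
    obtain ⟨a, ha, b, hb, hs, hadj⟩ := exists_exchange_of_upLaplacian_apply_ne_zero hts hup
    exact hL (downLaplacian_add_upLaplacian_apply_eq_zero ha hb hs ht hadj)
  rw [hup, add_zero] at hL
  obtain ⟨-, a, ha, b, hb, hs⟩ := exists_exchange_of_downLaplacian_apply_ne_zero hts hL
  have hbs : b ∈ s.1 := hs ▸ Finset.mem_insert_self b _
  have hadj (c) (hc : c ∈ t.1.erase a) : G.Adj b c :=
    Simp.isClique s hbs (hs ▸ Finset.mem_insert_of_mem hc)
      fun h => hb (h ▸ Finset.mem_of_mem_erase hc)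
  have hba : ¬G.Adj b a := fun hba => hL <| by
    have hcancel := downLaplacian_add_upLaplacian_apply_eq_zero ha hb hs ht fun c hc =>
      if hca : c = a then hca ▸ hba else hadj c (Finset.mem_erase.mpr ⟨hca, hc⟩)
    rwa [hup, add_zero] at hcancel
  exact Finset.mem_image.mpr ⟨⟨a, b⟩, Finset.mem_sigma.mpr ⟨ha,
    Finset.mem_filter.mpr ⟨Finset.mem_univ _, hb, hba, hadj⟩⟩, hs.symm⟩

theorem laplacian_row_sum_le (t : Simp G) :
    (downLaplacian G + upLaplacian G) t t +
      ∑ s ∈ univ.erase t, |(downLaplacian G + upLaplacian G) t s| ≤ 2 * G.maxDegree := by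
  simp only [Matrix.add_apply]
  have hoff : ∑ s ∈ univ.erase t, |downLaplacian G t s + upLaplacian G t s| ≤
      #{s ∈ univ.erase t | downLaplacian G t s + upLaplacian G t s ≠ 0} := by
    refine (sum_le_card_filter_ne_zero fun s hs =>
      abs_laplacian_apply_le_one (Finset.ne_of_mem_erase hs).symm).trans_eq ?_
    simp only [ne_eq, abs_eq_zero]
  have hup := upLaplacian_apply_self_le t
  obtain ⟨x, hx⟩ := t.2.1
  rcases (Finset.one_le_card.mpr t.2.1).eq_or_lt with h1 | h2
  · have hcount : #(coneVertices G t.1) +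
        #{s ∈ univ.erase t | downLaplacian G t s + upLaplacian G t s ≠ 0} ≤ 2 * G.maxDegree := by
      have := card_erase_add_card_coneVertices_add_sum_le_degree (Simp.isClique t) hx
      have := card_laplacian_support_le_of_card_eq_one h1.symm
      have := G.degree_le_maxDegree x
      omega
    rw [downLaplacian_apply_eq_zero_of_card_eq_one h1.symm, zero_add]
    have := Nat.cast_le (α := ℝ).mpr hcount
    push_cast at this
    linarith
  · have hcount : #t.1 + #(coneVertices G t.1) +
        #{s ∈ univ.erase t | downLaplacian G t s + upLaplacian G t s ≠ 0} ≤ 2 * G.maxDegree := by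
      have := card_add_card_coneVertices_add_sum_le_two_mul_maxDegree (Simp.isClique t) h2
      have := card_laplacian_support_le_of_two_le_card h2
      omega
    have := Nat.cast_le (α := ℝ).mpr hcount
    push_cast at this
    linarith [downLaplacian_apply_self_le t]

end Laplacians

/-- Every eigenvalue `λ` of `D` satisfies `λ² ≤ 2·deg` where `deg` is the maximal vertex degree;
hence every eigenvalue of `L = D²` lies in `[0, 2·deg]`, and the average of the squares of the
eigenvalues of `D` is at most `2·deg`. -/
theorem dirac_eigenvalue_bound (hD : (Dmat G).IsHermitian)
    (hL : (Dmat G * Dmat G).IsHermitian) :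
    (∀ i, (hD.eigenvalues i) ^ 2 ≤ 2 * G.maxDegree) ∧
    (∀ i, hL.eigenvalues i ∈ Set.Icc (0 : ℝ) (2 * G.maxDegree)) ∧
    (∑ i, (hD.eigenvalues i) ^ 2) / (Fintype.card (Simp G)) ≤ 2 * G.maxDegree := by
  have hrow (t : Simp G) : (Dmat G * Dmat G) t t +
      ∑ s ∈ univ.erase t, |(Dmat G * Dmat G) t s| ≤ 2 * G.maxDegree := by
    rw [Dmat_mul_self]
    exact laplacian_row_sum_le t
  have hsq (i) : hD.eigenvalues i ^ 2 ≤ 2 * G.maxDegree :=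
    le_of_mem_spectrum_of_row_sum_le hrow
      (sq (Dmat G) ▸ spectrum.pow_mem_pow _ 2 (hD.eigenvalues_mem_spectrum_real i))
  have hpsd : (Dmat G * Dmat G).PosSemidef := by
    simpa only [hD.eq] using posSemidef_conjTranspose_mul_self (Dmat G)
  refine ⟨hsq, fun i => ⟨hpsd.eigenvalues_nonneg i,
    le_of_mem_spectrum_of_row_sum_le hrow (hL.eigenvalues_mem_spectrum_real i)⟩, ?_⟩
  refine div_le_of_le_mul₀ (Nat.cast_nonneg _) (by positivity) ?_
  simpa [mul_comm] using Finset.sum_le_card_nsmul univ _ _ fun i _ => hsq i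
end

section
/- For any two Hermitian complex n × n matrices A and B with eigenvalues α_1 ≤ α_2 ≤ … ≤ α_n and β_1 ≤ β_2 ≤ … ≤ β_n (each listed in increasing order with multiplicity), one has Σ_{j=1}^{n} |α_j − β_j| ≤ Σ_{i,j=1}^{n} |A_{ij} − B_{ij}|. -/
/-!
Write `C = A - B` and let `P = C⁺` be its positive part, so that `A ≤ B + P` and `B ≤ B + P` in
the Loewner order. By Weyl's monotonicity principle the increasingly sorted eigenvalues `ε` of
`B + P` dominate both `α` and `β`, hence
`∑ |αⱼ - βⱼ| ≤ ∑ (2εⱼ - αⱼ - βⱼ) = tr (2P - C) = tr |C|`.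
Finally `tr |C| = tr (C S)` for the unitary `S = sign C`, and the entries of a unitary matrix have
modulus at most `1`, so `tr |C| ≤ ∑ᵢⱼ |Cᵢⱼ|`.
-/

open Matrix Finset BigOperators
open scoped InnerProductSpace MatrixOrder ComplexOrder

namespace OrthonormalBasis

variable {𝕜 E ι : Type*} [RCLike 𝕜] [NormedAddCommGroup E] [InnerProductSpace 𝕜 E] [Fintype ι]
  (b : OrthonormalBasis ι 𝕜 E)

lemma inner_map_eq_mul_inner {T : E →ₗ[𝕜] E} {μ : ι → ℝ}
    (hT : ∀ i, T (b i) = (μ i : 𝕜) • b i) (x : E) (i : ι) :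
    ⟪b i, T x⟫_𝕜 = μ i * ⟪b i, x⟫_𝕜 := by
  conv_lhs => rw [← b.sum_repr' x]
  simp only [map_sum, map_smul, hT, smul_smul]
  rw [b.orthonormal.inner_right_fintype, mul_comm]

lemma re_inner_map_self_eq_sum {T : E →ₗ[𝕜] E} {μ : ι → ℝ}
    (hT : ∀ i, T (b i) = (μ i : 𝕜) • b i) (x : E) :
    RCLike.re ⟪x, T x⟫_𝕜 = ∑ i, μ i * ‖⟪b i, x⟫_𝕜‖ ^ 2 := by
  rw [← b.sum_inner_mul_inner, map_sum]
  refine sum_congr rfl fun i _ => ?_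
  rw [b.inner_map_eq_mul_inner hT, mul_left_comm, RCLike.re_ofReal_mul, ← inner_conj_symm,
    RCLike.conj_mul, ← RCLike.ofReal_pow, RCLike.ofReal_re]

lemma inner_eq_zero_of_mem_span_image {S : Set ι} {x : E} (hx : x ∈ Submodule.span 𝕜 (b '' S))
    {i : ι} (hi : i ∉ S) : ⟪b i, x⟫_𝕜 = 0 := by
  rw [← b.coe_toBasis, Module.Basis.mem_span_image] at hx
  rw [← b.repr_apply_apply, ← b.coe_toBasis_repr_apply]
  by_contra h
  exact hi (hx (Finsupp.mem_support_iff.2 h))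

lemma finrank_span_image (s : Finset ι) :
    Module.finrank 𝕜 (Submodule.span 𝕜 (b '' s)) = s.card := by
  rw [Set.image_eq_range, ← Fintype.card_coe, ← finrank_span_eq_card
    (b.orthonormal.linearIndependent.comp ((↑) : s → ι) Subtype.val_injective)]
  rfl

lemma mul_norm_sq_le_re_inner_map_self {T : E →ₗ[𝕜] E} {μ : ι → ℝ}
    (hT : ∀ i, T (b i) = (μ i : 𝕜) • b i) {S : Set ι} {c : ℝ} (hc : ∀ i ∈ S, c ≤ μ i) {x : E}
    (hx : x ∈ Submodule.span 𝕜 (b '' S)) : c * ‖x‖ ^ 2 ≤ RCLike.re ⟪x, T x⟫_𝕜 := by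
  rw [b.re_inner_map_self_eq_sum hT, ← b.sum_sq_norm_inner_right x, mul_sum]
  refine sum_le_sum fun i _ => ?_
  by_cases hi : i ∈ S
  · exact mul_le_mul_of_nonneg_right (hc i hi) (sq_nonneg _)
  · simp [b.inner_eq_zero_of_mem_span_image hx hi]

lemma re_inner_map_self_le_mul_norm_sq {T : E →ₗ[𝕜] E} {μ : ι → ℝ}
    (hT : ∀ i, T (b i) = (μ i : 𝕜) • b i) {S : Set ι} {c : ℝ} (hc : ∀ i ∈ S, μ i ≤ c) {x : E}
    (hx : x ∈ Submodule.span 𝕜 (b '' S)) : RCLike.re ⟪x, T x⟫_𝕜 ≤ c * ‖x‖ ^ 2 := by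
  rw [b.re_inner_map_self_eq_sum hT, ← b.sum_sq_norm_inner_right x, mul_sum]
  refine sum_le_sum fun i _ => ?_
  by_cases hi : i ∈ S
  · exact mul_le_mul_of_nonneg_right (hc i hi) (sq_nonneg _)
  · simp [b.inner_eq_zero_of_mem_span_image hx hi]

theorem eigenvalues_le_of_re_inner_le {n : ℕ} (b b' : OrthonormalBasis (Fin n) 𝕜 E)
    {T T' : E →ₗ[𝕜] E} {μ ν : Fin n → ℝ} (hμ : Monotone μ) (hν : Monotone ν)
    (hT : ∀ i, T (b i) = (μ i : 𝕜) • b i) (hT' : ∀ i, T' (b' i) = (ν i : 𝕜) • b' i)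
    (hTT' : ∀ x, RCLike.re ⟪x, T x⟫_𝕜 ≤ RCLike.re ⟪x, T' x⟫_𝕜) : μ ≤ ν := by
  intro j
  have : FiniteDimensional 𝕜 E := .of_basis b.toBasis
  -- the two spans have dimensions `n - j` and `j + 1`, so they cannot be disjoint
  obtain ⟨x, hxV, hxW, hx0⟩ : ∃ x ∈ Submodule.span 𝕜 (b '' (Ici j : Finset (Fin n))),
      x ∈ Submodule.span 𝕜 (b' '' (Iic j : Finset (Fin n))) ∧ x ≠ 0 := by
    by_contra! h
    have := Submodule.finrank_add_finrank_le_of_disjoint (Submodule.disjoint_def.2 h)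
    rw [b.finrank_span_image, b'.finrank_span_image, Fin.card_Ici, Fin.card_Iic,
      Module.finrank_eq_card_basis b.toBasis, Fintype.card_fin] at this
    omega
  have hlow := b.mul_norm_sq_le_re_inner_map_self hT (fun i hi => hμ (mem_Ici.1 hi)) hxV
  have hup := b'.re_inner_map_self_le_mul_norm_sq hT' (fun i hi => hν (mem_Iic.1 hi)) hxW
  exact le_of_mul_le_mul_right (hlow.trans ((hTT' x).trans hup)) (by positivity)

end OrthonormalBasis

namespace Matrix

variable {𝕜 ι : Type*} [RCLike 𝕜] [Fintype ι] [DecidableEq ι]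

lemma norm_trace_mul_le_sum_norm (C : Matrix ι ι 𝕜) {U : Matrix ι ι 𝕜}
    (hU : U ∈ unitaryGroup ι 𝕜) : ‖(C * U).trace‖ ≤ ∑ i, ∑ j, ‖C i j‖ := by
  calc ‖(C * U).trace‖ ≤ ∑ i, ∑ j, ‖C i j‖ * ‖U j i‖ := by
        simp only [trace, diag, mul_apply]
        refine (norm_sum_le _ _).trans (sum_le_sum fun i _ => (norm_sum_le _ _).trans ?_)
        simp only [norm_mul, le_refl]
    _ ≤ ∑ i, ∑ j, ‖C i j‖ := by
        gcongr with i _ j _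
        exact mul_le_of_le_one_right (norm_nonneg _) (entry_norm_bound_of_unitary hU j i)

namespace IsHermitian

variable {A B : Matrix ι ι 𝕜}

lemma toLpLin_eigenvectorBasis (hA : A.IsHermitian) (i : ι) :
    toLpLin 2 2 A (hA.eigenvectorBasis i) = (hA.eigenvalues i : 𝕜) • hA.eigenvectorBasis i := by
  rw [toLpLin_apply, hA.mulVec_eigenvectorBasis, RCLike.real_smul_eq_coe_smul (K := 𝕜)]
  rfl

lemma re_inner_toLpLin_le_of_le (hAB : A ≤ B) (x : EuclideanSpace 𝕜 ι) :
    RCLike.re ⟪x, toLpLin 2 2 A x⟫_𝕜 ≤ RCLike.re ⟪x, toLpLin 2 2 B x⟫_𝕜 := by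
  rw [← sub_nonneg, ← map_sub, ← inner_sub_right, ← LinearMap.sub_apply, ← map_sub,
    EuclideanSpace.inner_eq_star_dotProduct, toLpLin_apply, dotProduct_comm]
  exact PosSemidef.re_dotProduct_nonneg hAB _

theorem eigenvalues_comp_le_of_le {n : ℕ} {M N : Matrix (Fin n) (Fin n) 𝕜} (hM : M.IsHermitian)
    (hN : N.IsHermitian) (hMN : M ≤ N) {μ ν : Fin n → ℝ} (hμ : Monotone μ) (hν : Monotone ν)
    {σ τ : Equiv.Perm (Fin n)} (hμσ : μ = hM.eigenvalues ∘ σ) (hντ : ν = hN.eigenvalues ∘ τ) :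
    μ ≤ ν :=
  (hM.eigenvectorBasis.reindex σ.symm).eigenvalues_le_of_re_inner_le
    (hN.eigenvectorBasis.reindex τ.symm) hμ hν
    (fun i => by simp [hμσ, hM.toLpLin_eigenvectorBasis])
    (fun i => by simp [hντ, hN.toLpLin_eigenvectorBasis])
    (re_inner_toLpLin_le_of_le hMN)

lemma re_trace_eq_sum_eigenvalues (hA : A.IsHermitian) :
    RCLike.re A.trace = ∑ i, hA.eigenvalues i := by
  simp [hA.trace_eq_sum_eigenvalues]

lemma trace_cfc (hA : A.IsHermitian) (f : ℝ → ℝ) :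
    (cfc f A).trace = ∑ i, (f (hA.eigenvalues i) : 𝕜) := by
  rw [hA.cfc_eq, IsHermitian.cfc, Unitary.conjStarAlgAut_apply, trace_mul_cycle,
    Unitary.coe_star_mul_self, one_mul, trace_diagonal]
  rfl

lemma sum_abs_eigenvalues_le_sum_norm (hA : A.IsHermitian) :
    ∑ i, |hA.eigenvalues i| ≤ ∑ i, ∑ j, ‖A i j‖ := by
  set s : ℝ → ℝ := fun x => if x < 0 then -1 else 1
  have hs : ContinuousOn s (spectrum ℝ A) := finite_real_spectrum.continuousOn _
  have hS : cfc s A ∈ unitaryGroup ι 𝕜 := by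
    rw [mem_unitaryGroup_iff, (cfc_predicate s A).star_eq, ← cfc_mul s s A,
      cfc_congr (g := 1) fun x _ => ?_, cfc_one ℝ A]
    simp only [s]
    split_ifs <;> norm_num
  have hAS : A * cfc s A = cfc (fun x : ℝ => |x|) A := by
    nth_rw 1 [← cfc_id' ℝ A]
    rw [← cfc_mul _ _ A]
    refine cfc_congr fun x _ => ?_
    simp only [s]
    split_ifs with h
    · rw [abs_of_neg h]; ring
    · rw [abs_of_nonneg (not_lt.1 h)]; ring
  calc ∑ i, |hA.eigenvalues i| = RCLike.re (A * cfc s A).trace := by simp [hAS, hA.trace_cfc]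
    _ ≤ ‖(A * cfc s A).trace‖ := RCLike.re_le_norm _
    _ ≤ ∑ i, ∑ j, ‖A i j‖ := A.norm_trace_mul_le_sum_norm hS

end IsHermitian

end Matrix

/-- **Lidskii-type inequality.** For Hermitian `n × n` complex matrices `A` and `B` with
eigenvalues `α_1 ≤ … ≤ α_n` and `β_1 ≤ … ≤ β_n` (listed in increasing order with multiplicity),
`∑_j |α_j − β_j| ≤ ∑_{i,j} |A_{ij} − B_{ij}|`. -/
theorem lidskii_l1 (n : ℕ) (A B : Matrix (Fin n) (Fin n) ℂ)
    (hA : A.IsHermitian) (hB : B.IsHermitian) (α β : Fin n → ℝ)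
    (hαmono : Monotone α) (hβmono : Monotone β)
    (hα : ∃ σ : Equiv.Perm (Fin n), α = hA.eigenvalues ∘ σ)
    (hβ : ∃ τ : Equiv.Perm (Fin n), β = hB.eigenvalues ∘ τ) :
    ∑ j, |α j - β j| ≤ ∑ i, ∑ j, ‖(A - B) i j‖ := by
  obtain ⟨σ, hασ⟩ := hα
  obtain ⟨τ, hβτ⟩ := hβ
  have hC : (A - B).IsHermitian := hA.sub hB
  set P := cfc (fun x : ℝ => max x 0) (A - B)
  have hP : 0 ≤ P := cfc_nonneg fun x _ => le_max_right x 0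
  have hAD : A ≤ B + P := by
    have : B + P - A = cfc (fun x : ℝ => max x 0 - x) (A - B) := by
      rw [cfc_sub _ _ (A - B), cfc_id' ℝ (A - B)]; abel
    rw [← sub_nonneg, this]
    exact cfc_nonneg fun x _ => sub_nonneg.2 (le_max_left x 0)
  have hD : (B + P).IsHermitian := hB.add hP.posSemidef.isHermitian
  set ε := hD.eigenvalues ∘ Tuple.sort hD.eigenvalues
  have hαε : α ≤ ε := hA.eigenvalues_comp_le_of_le hD hAD hαmono (Tuple.monotone_sort _) hασ rfl
  have hβε : β ≤ ε := hB.eigenvalues_comp_le_of_le hD (le_add_of_nonneg_right hP) hβmono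
    (Tuple.monotone_sort _) hβτ rfl
  have hsum {M : Matrix (Fin n) (Fin n) ℂ} (hM : M.IsHermitian) (π : Equiv.Perm (Fin n)) :
      ∑ j, (hM.eigenvalues ∘ π) j = RCLike.re M.trace := by
    rw [hM.re_trace_eq_sum_eigenvalues]
    exact Equiv.sum_comp π hM.eigenvalues
  calc ∑ j, |α j - β j| ≤ ∑ j, (2 * ε j - α j - β j) := sum_le_sum fun j _ =>
        abs_sub_le_iff.2 ⟨by linarith [hαε j, hβε j], by linarith [hαε j, hβε j]⟩
    _ = 2 * RCLike.re (B + P).trace - RCLike.re A.trace - RCLike.re B.trace := by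
        rw [sum_sub_distrib, sum_sub_distrib, ← mul_sum, hsum hD, hασ, hsum hA, hβτ, hsum hB]
    _ = 2 * RCLike.re P.trace - RCLike.re (A - B).trace := by
        rw [trace_add, trace_sub, map_add, map_sub]
        ring
    _ = ∑ i, (2 * max (hC.eigenvalues i) 0 - hC.eigenvalues i) := by
        rw [hC.trace_cfc, hC.re_trace_eq_sum_eigenvalues, map_sum, sum_sub_distrib, mul_sum]
        simp only [RCLike.ofReal_re]
    _ = ∑ i, |hC.eigenvalues i| := sum_congr rfl fun i _ => by
        rcases le_total (hC.eigenvalues i) 0 with h | h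
        · rw [max_eq_right h, abs_of_nonpos h]; ring
        · rw [max_eq_left h, abs_of_nonneg h]; ring
    _ ≤ ∑ i, ∑ j, ‖(A - B) i j‖ := hC.sum_abs_eigenvalues_le_sum_norm
end

section
/- Let G and H be finite simple graphs on the same vertex set of n vertices, let L_0(G) and L_0(H) be their Laplacian matrices, with eigenvalues λ_1 ≤ … ≤ λ_n and μ_1 ≤ … ≤ μ_n respectively, and suppose every vertex degree in G and in H is at most deg. Then (1/n) Σ_{j=1}^{n} |λ_j − μ_j| ≤ 2·deg·e/n, where e is the number of vertex pairs that are an edge in exactly one of G and H. -/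
open Matrix Finset BigOperators

/-! Put `K = G ⊓ H`. For `K ≤ G` the quadratic form of `L(G) - L(K)` is a sum of squares over
the edges of `G` missing from `K`, so by Weyl's monotonicity theorem (the Courant–Fischer
dimension count: a nonzero vector orthogonal to the eigenvectors of `L(K)` below index `k` and to
those of `L(G)` above `k`) every sorted eigenvalue of `L(K)` is at most the corresponding one of
`L(G)`. The differences being nonnegative, their sum is `tr L(G) - tr L(K) = 2 (|E(G)| - |E(K)|)`.
The triangle inequality through `K` then gives `∑ |λ_j - μ_j| ≤ 2 |E(G) ∆ E(H)|`, and
`|E(G) ∆ E(H)| ≤ deg · e` since `deg ≥ 1` as soon as either graph has an edge. -/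

theorem Module.exists_ne_zero_forall_eq_zero_of_card_lt_finrank {K V ι : Type*} [Field K]
    [AddCommGroup V] [Module K V] [FiniteDimensional K V] [Fintype ι] (φ : ι → Module.Dual K V)
    (h : Fintype.card ι < Module.finrank K V) : ∃ x ≠ 0, ∀ i, φ i x = 0 := by
  have hker := (LinearMap.pi φ).ker_ne_bot_of_finrank_lt
    (by rwa [Module.finrank_fintype_fun_eq_card])
  obtain ⟨x, hx, hx0⟩ := Submodule.exists_mem_ne_zero_of_ne_bot hker
  exact ⟨x, hx0, fun i => congrFun (LinearMap.mem_ker.mp hx) i⟩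

theorem Matrix.dotProduct_mulVec_mul_diagonal_mul_star {ι : Type*} [Fintype ι] [DecidableEq ι]
    (U : Matrix ι ι ℝ) (d : ι → ℝ) (x : ι → ℝ) :
    x ⬝ᵥ ((U * diagonal d * star U) *ᵥ x) = ∑ i, d i * (star U *ᵥ x) i ^ 2 := by
  rw [← mulVec_mulVec, ← mulVec_mulVec, dotProduct_mulVec, ← mulVec_transpose,
    star_eq_conjTranspose, conjTranspose_eq_transpose_of_trivial]
  simp only [dotProduct, mulVec_diagonal]
  exact sum_congr rfl fun i _ => by ring

theorem Finset.card_symmDiff_add_two_mul_card_inter {α : Type*} [DecidableEq α]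
    (s t : Finset α) : #(symmDiff s t) + 2 * #(s ∩ t) = #s + #t := by
  rw [symmDiff_def, sup_eq_union, card_union_of_disjoint disjoint_sdiff_sdiff,
    ← card_sdiff_add_card_inter s t, ← card_sdiff_add_card_inter t s, inter_comm t s]
  ring

namespace Matrix.IsHermitian

variable {n : ℕ} {A B : Matrix (Fin n) (Fin n) ℝ}

noncomputable def sortedEigenvalues (hA : A.IsHermitian) : Fin n → ℝ :=
  hA.eigenvalues ∘ Tuple.sort hA.eigenvalues

theorem monotone_sortedEigenvalues (hA : A.IsHermitian) : Monotone hA.sortedEigenvalues :=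
  Tuple.monotone_sort _

theorem eq_sortedEigenvalues_of_monotone (hA : A.IsHermitian) {σ : Equiv.Perm (Fin n)}
    (hσ : Monotone (hA.eigenvalues ∘ σ)) : hA.eigenvalues ∘ σ = hA.sortedEigenvalues :=
  Tuple.unique_monotone hσ hA.monotone_sortedEigenvalues

theorem sum_sortedEigenvalues (hA : A.IsHermitian) : ∑ j, hA.sortedEigenvalues j = A.trace := by
  rw [hA.trace_eq_sum_eigenvalues]
  exact Equiv.sum_comp _ hA.eigenvalues

/-- The coordinate along the eigenvector of the `j`-th smallest eigenvalue. -/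
noncomputable def sortedEigenCoord (hA : A.IsHermitian) (j : Fin n) :
    Module.Dual ℝ (Fin n → ℝ) :=
  LinearMap.proj (Tuple.sort hA.eigenvalues j) ∘ₗ
    (star (hA.eigenvectorUnitary : Matrix (Fin n) (Fin n) ℝ)).mulVecLin

theorem dotProduct_mulVec_eq_sum_sortedEigenvalues (hA : A.IsHermitian) (x : Fin n → ℝ) :
    x ⬝ᵥ (A *ᵥ x) = ∑ j, hA.sortedEigenvalues j * hA.sortedEigenCoord j x ^ 2 := by
  conv_lhs => rw [hA.spectral_theorem, Unitary.conjStarAlgAut_apply, RCLike.ofReal_real_eq_id,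
    Function.id_comp, dotProduct_mulVec_mul_diagonal_mul_star]
  exact (Equiv.sum_comp (Tuple.sort hA.eigenvalues) _).symm

theorem dotProduct_self_eq_sum_sortedEigenCoord_sq (hA : A.IsHermitian) (x : Fin n → ℝ) :
    x ⬝ᵥ x = ∑ j, hA.sortedEigenCoord j x ^ 2 := by
  have hU : (hA.eigenvectorUnitary : Matrix (Fin n) (Fin n) ℝ) * diagonal (fun _ => 1) *
      star (hA.eigenvectorUnitary : Matrix (Fin n) (Fin n) ℝ) = 1 := by
    rw [diagonal_one, Matrix.mul_one, Unitary.mul_star_self_of_mem hA.eigenvectorUnitary.2]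
  nth_rewrite 2 [← one_mulVec x]
  rw [← hU, dotProduct_mulVec_mul_diagonal_mul_star]
  simp only [one_mul]
  exact (Equiv.sum_comp (Tuple.sort hA.eigenvalues) _).symm

theorem sortedEigenvalues_mul_le_dotProduct_mulVec_of_forall_lt (hA : A.IsHermitian)
    {x : Fin n → ℝ} {k : Fin n} (hx : ∀ j < k, hA.sortedEigenCoord j x = 0) :
    hA.sortedEigenvalues k * (x ⬝ᵥ x) ≤ x ⬝ᵥ (A *ᵥ x) := by
  rw [hA.dotProduct_self_eq_sum_sortedEigenCoord_sq,
    hA.dotProduct_mulVec_eq_sum_sortedEigenvalues, mul_sum]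
  refine sum_le_sum fun j _ => ?_
  rcases lt_or_ge j k with hj | hj
  · simp [hx j hj]
  · exact mul_le_mul_of_nonneg_right (hA.monotone_sortedEigenvalues hj) (sq_nonneg _)

theorem dotProduct_mulVec_le_sortedEigenvalues_mul_of_forall_gt (hA : A.IsHermitian)
    {x : Fin n → ℝ} {k : Fin n} (hx : ∀ j > k, hA.sortedEigenCoord j x = 0) :
    x ⬝ᵥ (A *ᵥ x) ≤ hA.sortedEigenvalues k * (x ⬝ᵥ x) := by
  rw [hA.dotProduct_self_eq_sum_sortedEigenCoord_sq,
    hA.dotProduct_mulVec_eq_sum_sortedEigenvalues, mul_sum]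
  refine sum_le_sum fun j _ => ?_
  rcases lt_or_ge k j with hj | hj
  · simp [hx j hj]
  · exact mul_le_mul_of_nonneg_right (hA.monotone_sortedEigenvalues hj) (sq_nonneg _)

theorem sortedEigenvalues_le_of_forall_dotProduct_le (hA : A.IsHermitian) (hB : B.IsHermitian)
    (hAB : ∀ x, x ⬝ᵥ (A *ᵥ x) ≤ x ⬝ᵥ (B *ᵥ x)) (k : Fin n) :
    hA.sortedEigenvalues k ≤ hB.sortedEigenvalues k := by
  obtain ⟨x, hx0, hx⟩ := Module.exists_ne_zero_forall_eq_zero_of_card_lt_finrank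
    (Sum.elim (fun j : Iio k => hA.sortedEigenCoord j) (fun j : Ioi k => hB.sortedEigenCoord j))
    (by simp only [Fintype.card_sum, Fintype.card_coe, Fin.card_Iio, Fin.card_Ioi,
      Module.finrank_fin_fun]; omega)
  have hxx : 0 < x ⬝ᵥ x := by
    simpa using dotProduct_self_star_pos_iff.mpr hx0
  refine le_of_mul_le_mul_right ?_ hxx
  calc hA.sortedEigenvalues k * (x ⬝ᵥ x) ≤ x ⬝ᵥ (A *ᵥ x) :=
        hA.sortedEigenvalues_mul_le_dotProduct_mulVec_of_forall_lt fun j hj =>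
          hx (.inl ⟨j, mem_Iio.2 hj⟩)
    _ ≤ x ⬝ᵥ (B *ᵥ x) := hAB x
    _ ≤ hB.sortedEigenvalues k * (x ⬝ᵥ x) :=
        hB.dotProduct_mulVec_le_sortedEigenvalues_mul_of_forall_gt fun j hj =>
          hx (.inr ⟨j, mem_Ioi.2 hj⟩)

theorem sum_abs_sub_sortedEigenvalues_of_forall_dotProduct_le (hA : A.IsHermitian)
    (hB : B.IsHermitian) (hAB : ∀ x, x ⬝ᵥ (A *ᵥ x) ≤ x ⬝ᵥ (B *ᵥ x)) :
    ∑ j, |hB.sortedEigenvalues j - hA.sortedEigenvalues j| = B.trace - A.trace := by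
  rw [← hA.sum_sortedEigenvalues, ← hB.sum_sortedEigenvalues, ← sum_sub_distrib]
  exact sum_congr rfl fun j _ =>
    abs_of_nonneg (sub_nonneg.mpr (sortedEigenvalues_le_of_forall_dotProduct_le hA hB hAB j))

end Matrix.IsHermitian

namespace SimpleGraph

variable {V : Type*} [Fintype V] {n : ℕ}

theorem trace_lapMatrix (R : Type*) [Ring R] (G : SimpleGraph V) [DecidableRel G.Adj]
    [DecidableEq V] :
    (G.lapMatrix R).trace = 2 * #G.edgeFinset := by
  rw [lapMatrix, trace_sub, trace_adjMatrix, sub_zero, degMatrix, trace_diagonal]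
  exact_mod_cast congrArg (Nat.cast : ℕ → R) G.sum_degrees_eq_twice_card_edges

theorem dotProduct_lapMatrix_mulVec_mono {G K : SimpleGraph V} [DecidableRel G.Adj]
    [DecidableRel K.Adj] [DecidableEq V] (h : K ≤ G) (x : V → ℝ) :
    x ⬝ᵥ (K.lapMatrix ℝ *ᵥ x) ≤ x ⬝ᵥ (G.lapMatrix ℝ *ᵥ x) := by
  simp only [← toLinearMap₂'_apply', lapMatrix_toLinearMap₂']
  gcongr with i _ j _
  split_ifs with hK hG
  · exact le_rfl
  · exact absurd (h hK) hG
  · exact sq_nonneg _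
  · exact le_rfl

theorem pos_of_forall_degree_le {G : SimpleGraph V} [DecidableRel G.Adj] {d : ℕ}
    (hd : ∀ v, G.degree v ≤ d) (hG : G.edgeFinset.Nonempty) : 0 < d := by
  obtain ⟨e, he⟩ := hG
  induction e using Sym2.ind with
  | _ u v => exact ((G.degree_pos_iff_exists_adj u).2 ⟨v, mem_edgeFinset.1 he⟩).trans_le (hd u)

theorem card_symmDiff_edgeFinset_le_mul {G H : SimpleGraph V} [DecidableRel G.Adj]
    [DecidableRel H.Adj] [DecidableEq V] {d : ℕ} (hdG : ∀ v, G.degree v ≤ d)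
    (hdH : ∀ v, H.degree v ≤ d) :
    #(symmDiff G.edgeFinset H.edgeFinset) ≤ d * #(symmDiff G.edgeFinset H.edgeFinset) := by
  rcases (symmDiff G.edgeFinset H.edgeFinset).eq_empty_or_nonempty with hS | ⟨s, hs⟩
  · simp [hS]
  · have hd : 0 < d := by
      rcases mem_symmDiff.1 hs with ⟨hsG, -⟩ | ⟨hsH, -⟩
      exacts [pos_of_forall_degree_le hdG ⟨s, hsG⟩, pos_of_forall_degree_le hdH ⟨s, hsH⟩]
    exact Nat.le_mul_of_pos_left _ hd


theorem sum_abs_sub_sortedEigenvalues_lapMatrix_of_le {G K : SimpleGraph (Fin n)}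
    [DecidableRel G.Adj] [DecidableRel K.Adj] (hG : (G.lapMatrix ℝ).IsHermitian)
    (hK : (K.lapMatrix ℝ).IsHermitian) (h : K ≤ G) :
    ∑ j, |hG.sortedEigenvalues j - hK.sortedEigenvalues j| =
      2 * #G.edgeFinset - 2 * #K.edgeFinset := by
  rw [hK.sum_abs_sub_sortedEigenvalues_of_forall_dotProduct_le hG
    (dotProduct_lapMatrix_mulVec_mono h), trace_lapMatrix, trace_lapMatrix]

theorem sum_abs_sub_sortedEigenvalues_lapMatrix_le {G H : SimpleGraph (Fin n)}
    [DecidableRel G.Adj] [DecidableRel H.Adj] (hG : (G.lapMatrix ℝ).IsHermitian)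
    (hH : (H.lapMatrix ℝ).IsHermitian) :
    ∑ j, |hG.sortedEigenvalues j - hH.sortedEigenvalues j| ≤
      2 * #(symmDiff G.edgeFinset H.edgeFinset) := by
  have hK := (G ⊓ H).isHermitian_lapMatrix ℝ
  have hGK := sum_abs_sub_sortedEigenvalues_lapMatrix_of_le hG hK inf_le_left
  have hHK := sum_abs_sub_sortedEigenvalues_lapMatrix_of_le hH hK inf_le_right
  have hcard : (#(symmDiff G.edgeFinset H.edgeFinset) : ℝ) +
      2 * #(G.edgeFinset ∩ H.edgeFinset) = #G.edgeFinset + #H.edgeFinset := by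
    exact_mod_cast card_symmDiff_add_two_mul_card_inter G.edgeFinset H.edgeFinset
  simp only [edgeFinset_inf] at hGK hHK
  calc ∑ j, |hG.sortedEigenvalues j - hH.sortedEigenvalues j|
      ≤ ∑ j, (|hG.sortedEigenvalues j - hK.sortedEigenvalues j| +
          |hH.sortedEigenvalues j - hK.sortedEigenvalues j|) :=
        sum_le_sum fun j _ => by
          rw [abs_sub_comm (hH.sortedEigenvalues j)]
          exact abs_sub_le _ _ _
    _ = 2 * #(symmDiff G.edgeFinset H.edgeFinset) := by
        rw [sum_add_distrib, hGK, hHK]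
        linarith

end SimpleGraph

/-- For graphs `G`, `H` on the same `n` vertices with all degrees at most `deg`, the sorted
Laplacian spectra `λ_1 ≤ … ≤ λ_n` and `μ_1 ≤ … ≤ μ_n` satisfy
`(1/n) ∑_j |λ_j − μ_j| ≤ 2·deg·e/n`, where `e` is the number of vertex pairs that are an edge
in exactly one of `G` and `H`. -/
theorem laplacian_spectra_perturbation (n : ℕ) (G H : SimpleGraph (Fin n))
    [DecidableRel G.Adj] [DecidableRel H.Adj]
    (hG : (G.lapMatrix ℝ).IsHermitian) (hH : (H.lapMatrix ℝ).IsHermitian)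
    (deg : ℕ) (hdegG : ∀ v, G.degree v ≤ deg) (hdegH : ∀ v, H.degree v ≤ deg)
    (lam mu : Fin n → ℝ) (hlmono : Monotone lam) (hmmono : Monotone mu)
    (hlam : ∃ σ : Equiv.Perm (Fin n), lam = hG.eigenvalues ∘ σ)
    (hmu : ∃ τ : Equiv.Perm (Fin n), mu = hH.eigenvalues ∘ τ)
    (e : ℕ) (he : e = (symmDiff G.edgeFinset H.edgeFinset).card) :
    (1 / n : ℝ) * ∑ j, |lam j - mu j| ≤ 2 * deg * e / n := by
  obtain ⟨σ, rfl⟩ := hlam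
  obtain ⟨τ, rfl⟩ := hmu
  rw [hG.eq_sortedEigenvalues_of_monotone hlmono, hH.eq_sortedEigenvalues_of_monotone hmmono,
    one_div_mul_eq_div, he]
  gcongr
  calc _ ≤ 2 * (#(symmDiff G.edgeFinset H.edgeFinset) : ℝ) :=
        SimpleGraph.sum_abs_sub_sortedEigenvalues_lapMatrix_le hG hH
    _ ≤ 2 * deg * #(symmDiff G.edgeFinset H.edgeFinset) := by
        rw [mul_assoc]
        gcongr
        exact_mod_cast SimpleGraph.card_symmDiff_edgeFinset_le_mul hdegG hdegH
end
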